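/- arXiv:1909.03507 — 2 statements merged into one kernel-verified Lean document; each statement's English description precedes it below -/
import Mathlib

section
/- Let V be a real vector space, B : V × V → ℝ a bilinear form, f : V → V an invertible linear map, α > 1 a real number, and E, E' ∈ V with f E = α E and f E' = α^(−1) E'. Let D ∈ V and suppose there is c > 0 such that B(f^n (E + E'), D) > c for all integers n ≥ 0. Then B(E, D) ≥ 0 and moreover if the inequality B(f^n(E+E'), D) > c holds for all integers n ∈ ℤ, then B(E, D) > 0 and B(E', D) > 0. -/
open Filter Topology

theorem LinearEquiv.symm_apply_of_apply_eq_smul {K V : Type*} [Field K] [AddCommGroup V]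
    [Module K V] (f : V ≃ₗ[K] V) {α : K} (hα : α ≠ 0) {v : V} (hv : f v = α • v) :
    f.symm v = α⁻¹ • v := by
  rw [f.symm_apply_eq, map_smul, hv, smul_smul, inv_mul_cancel₀ hα, one_smul]

theorem LinearEquiv.zpow_apply_of_apply_eq_smul {K V : Type*} [Field K] [AddCommGroup V]
    [Module K V] (f : V ≃ₗ[K] V) {α : K} (hα : α ≠ 0) {v : V} (hv : f v = α • v) (n : ℤ) :
    (f ^ n) v = α ^ n • v := by
  induction n using Int.induction_on with
  | zero => simp
  | succ k ih =>
    rw [zpow_add_one, LinearEquiv.mul_apply, hv, map_smul, ih, smul_smul, zpow_add_one₀ hα,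
      mul_comm]
  | pred k ih =>
    rw [zpow_sub_one, LinearEquiv.mul_apply, LinearEquiv.coe_inv,
      f.symm_apply_of_apply_eq_smul hα hv, map_smul, ih, smul_smul, zpow_sub_one₀ hα, mul_comm]

/-- The term `α ^ (-n) * b` tends to `0`, so a nonpositive `a` would leave nothing to stay
above `c`. -/
theorem pos_of_forall_lt_zpow_mul_add_zpow_neg_mul {α a b c : ℝ} (hα : 1 < α) (hc : 0 < c)
    (h : ∀ n : ℕ, c < α ^ (n : ℤ) * a + α ^ (-(n : ℤ)) * b) : 0 < a := by
  by_contra! ha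
  have hlim : Tendsto (fun n : ℕ ↦ α ^ (-(n : ℤ)) * b) atTop (𝓝 0) := by
    simpa using (tendsto_inv_atTop_zero.comp (tendsto_pow_atTop_atTop_of_one_lt hα)).mul_const b
  have hbound (n : ℕ) : c ≤ α ^ (-(n : ℤ)) * b := by
    have : α ^ (n : ℤ) * a ≤ 0 := mul_nonpos_of_nonneg_of_nonpos (by positivity) ha
    linarith [h n]
  exact (ge_of_tendsto' hlim hbound).not_gt hc

theorem stmt_4 (V : Type*) [AddCommGroup V] [Module ℝ V]
    (B : LinearMap.BilinForm ℝ V) (f : V ≃ₗ[ℝ] V) (α : ℝ) (hα : 1 < α)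
    (E E' D : V) (hE : f E = α • E) (hE' : f E' = α⁻¹ • E')
    (c : ℝ) (hc : 0 < c)
    (h : ∀ n : ℤ, 0 ≤ n → c < B ((f ^ n) (E + E')) D) :
    0 ≤ B E D ∧
      ((∀ n : ℤ, c < B ((f ^ n) (E + E')) D) → 0 < B E D ∧ 0 < B E' D) := by
  have hα₀ : α ≠ 0 := by positivity
  have hB (n : ℤ) : B ((f ^ n) (E + E')) D = α ^ n * B E D + α ^ (-n) * B E' D := by
    rw [map_add, f.zpow_apply_of_apply_eq_smul hα₀ hE,
      f.zpow_apply_of_apply_eq_smul (inv_ne_zero hα₀) hE', inv_zpow', map_add, map_smul,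
      map_smul]
    simp
  have hED : 0 < B E D :=
    pos_of_forall_lt_zpow_mul_add_zpow_neg_mul hα hc fun n ↦ hB n ▸ h n n.cast_nonneg
  refine ⟨hED.le, fun h' ↦ ⟨hED, ?_⟩⟩
  refine pos_of_forall_lt_zpow_mul_add_zpow_neg_mul (b := B E D) hα hc fun n ↦ ?_
  simpa only [hB, neg_neg, add_comm] using h' (-n)
end

section
/- Let V be a real vector space with a symmetric bilinear form B, let C ⊆ V be a cone closed under addition and positive scalar multiplication (the effective cone), and let f : V → V be an invertible linear isometry of B (B(fv, fw) = B(v,w)). Suppose E, E' ∈ V satisfy f E = α E and f E' = α^(−1) E' with α > 1, B(E + E', D) ≥ c > 0 for some fixed c and all D in a subset S ⊆ C, and that S is stable under f and f⁻¹. Then for every D ∈ S, B(E, D) > 0 and B(E', D) > 0. -/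
theorem stmt_18 (V : Type*) [AddCommGroup V] [Module ℝ V]
    (B : LinearMap.BilinForm ℝ V) (hB : ∀ v w, B v w = B w v)
    (C S : Set V)
    (hCadd : ∀ v ∈ C, ∀ w ∈ C, v + w ∈ C)
    (hCsmul : ∀ v ∈ C, ∀ t : ℝ, 0 < t → t • v ∈ C)
    (hSC : S ⊆ C)
    (f : V ≃ₗ[ℝ] V) (hf : ∀ v w, B (f v) (f w) = B v w)
    (α : ℝ) (hα : 1 < α) (E E' : V)
    (hE : f E = α • E) (hE' : f E' = α⁻¹ • E')
    (c : ℝ) (hc : 0 < c)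
    (hbound : ∀ D ∈ S, c ≤ B (E + E') D)
    (hSf : ∀ D ∈ S, f D ∈ S ∧ f.symm D ∈ S) :
    ∀ D ∈ S, 0 < B E D ∧ 0 < B E' D := by
  have hαpos : (0:ℝ) < α := lt_trans one_pos hα
  have hα0 : α ≠ 0 := ne_of_gt hαpos
  have h1E : f (α⁻¹ • E) = E := by
    rw [map_smul, hE, smul_smul, inv_mul_cancel₀ hα0, one_smul]
  have h1E' : f (α • E') = E' := by
    rw [map_smul, hE', smul_smul, mul_inv_cancel₀ hα0, one_smul]
  have hsymmE : f.symm E = α⁻¹ • E := by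
    conv_lhs => rw [← h1E]
    rw [f.symm_apply_apply]
  have hsymmE' : f.symm E' = α • E' := by
    conv_lhs => rw [← h1E']
    rw [f.symm_apply_apply]
  have hfED : ∀ D, B E (f D) = α⁻¹ * B E D := by
    intro D
    have h1 : f (α⁻¹ • E) = E := by
      rw [map_smul, hE, smul_smul, inv_mul_cancel₀ hα0, one_smul]
    calc B E (f D) = B (f (α⁻¹ • E)) (f D) := by rw [h1]
      _ = B (α⁻¹ • E) D := hf _ _
      _ = α⁻¹ * B E D := by simp
  have hfE'D : ∀ D, B E' (f D) = α * B E' D := by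
    intro D
    have h1 : f (α • E') = E' := by
      rw [map_smul, hE', smul_smul, mul_inv_cancel₀ hα0, one_smul]
    calc B E' (f D) = B (f (α • E')) (f D) := by rw [h1]
      _ = B (α • E') D := hf _ _
      _ = α * B E' D := by simp
  have hgED : ∀ D, B E (f.symm D) = α * B E D := by
    intro D
    have h := hf (f.symm E) (f.symm D)
    rw [f.apply_symm_apply, f.apply_symm_apply, hsymmE] at h
    have h2 : B E D = α⁻¹ * B E (f.symm D) := by simpa using h
    rw [h2]; field_simp
  have hgE'D : ∀ D, B E' (f.symm D) = α⁻¹ * B E' D := by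
    intro D
    have h := hf (f.symm E') (f.symm D)
    rw [f.apply_symm_apply, f.apply_symm_apply, hsymmE'] at h
    have h2 : B E' D = α * B E' (f.symm D) := by simpa using h
    rw [h2]; field_simp
  -- key inductive bound
  have key : ∀ n : ℕ, ∀ D ∈ S,
      c ≤ (α⁻¹) ^ n * B E D + α ^ n * B E' D ∧
      c ≤ α ^ n * B E D + (α⁻¹) ^ n * B E' D := by
    intro n
    induction n with
    | zero =>
      intro D hD
      have := hbound D hD
      simp only [pow_zero, one_mul]
      have hadd : B (E + E') D = B E D + B E' D := by simp
      rw [hadd] at this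
      exact ⟨this, this⟩
    | succ n ih =>
      intro D hD
      obtain ⟨hfD, hgD⟩ := hSf D hD
      constructor
      · have h := (ih (f D) hfD).1
        rw [hfED, hfE'D] at h
        calc c ≤ α⁻¹ ^ n * (α⁻¹ * B E D) + α ^ n * (α * B E' D) := h
          _ = α⁻¹ ^ (n + 1) * B E D + α ^ (n + 1) * B E' D := by ring
      · have h := (ih (f.symm D) hgD).2
        rw [hgED, hgE'D] at h
        calc c ≤ α ^ n * (α * B E D) + α⁻¹ ^ n * (α⁻¹ * B E' D) := h
          _ = α ^ (n + 1) * B E D + α⁻¹ ^ (n + 1) * B E' D := by ring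
  intro D hD
  have main : ∀ x y : ℝ, (∀ n : ℕ, c ≤ (α⁻¹) ^ n * x + α ^ n * y) → 0 < y := by
    intro x y h
    by_contra hy
    push_neg at hy
    obtain ⟨n, hn⟩ := pow_unbounded_of_one_lt (x / c) hα
    have h1 := h n
    have h2 : α ^ n * y ≤ 0 :=
      mul_nonpos_of_nonneg_of_nonpos (le_of_lt (pow_pos hαpos n)) hy
    have h3 : c ≤ (α⁻¹) ^ n * x := by linarith
    have h4 : c * α ^ n ≤ x := by
      have hp : (0:ℝ) < α ^ n := pow_pos hαpos n
      rw [inv_pow] at h3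
      calc c * α ^ n ≤ ((α ^ n)⁻¹ * x) * α ^ n := by
            exact mul_le_mul_of_nonneg_right h3 (le_of_lt hp)
        _ = x := by field_simp
    have h5 : x < c * α ^ n := by
      rw [div_lt_iff₀ hc] at hn
      linarith [hn]
    linarith
  constructor
  · exact main (B E' D) (B E D) (fun n => (key n D hD).2.trans_eq (by ring))
  · exact main (B E D) (B E' D) (fun n => (key n D hD).1)
end
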